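/- Let m, n ≥ 1, let L_m be an infinite unary regular language of state complexity at most m and L_n a finite unary language of state complexity at most n. If m ≤ n−2, then every word a^t with t ≥ n−2 is in L_m ⊙ L_n, so the state complexity of L_m ⊙ L_n is at most n−1. -/

import Mathlib

/-- Overlap assembly of two languages. -/
def langOA {α : Type*} (L₁ L₂ : Language α) : Language α :=
  {z | ∃ u v w : List α, v ≠ [] ∧ u ++ v ∈ L₁ ∧ v ++ w ∈ L₂ ∧ z = u ++ v ++ w}

/-- `scLe L k` : the state complexity of `L` is at most `k`. -/
def scLe {α : Type*} (L : Language α) (k : ℕ) : Prop :=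
  ∃ (Q : Type) (_ : Fintype Q) (M : DFA α Q), Fintype.card Q ≤ k ∧ M.accepts = L

/-- The unary word `a^k`. -/
def urep (k : ℕ) : List Unit := List.replicate k ()

/-!
Reading `a^k`, a unary DFA with at most `c` states follows the orbit of its start state under a
single map; by pigeonhole this orbit becomes periodic with preperiod plus period at most `c`.
So a finite language of state complexity `n` has no word of length `≥ n - 1` (it could be pumped),
and it contains `a^(n-2)`, for otherwise a threshold automaton with `n - 1` states accepts it.
An infinite language of state complexity `m` has, for every `t ≥ m - 1`, a word `a^s` with
`s ≤ t < s + m`. As `m ≤ n - 2`, the overlap of `a^s` with `a^(n-2)` then produces `a^t`, and the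
resulting language, containing every `a^t` with `t ≥ n - 2`, is again a threshold language.
-/

open Function

lemma urep_add (a b : ℕ) : urep (a + b) = urep a ++ urep b :=
  List.replicate_add a b ()

lemma urep_length (x : List Unit) : urep x.length = x :=
  (List.eq_replicate_iff.mpr ⟨rfl, fun _ _ => rfl⟩).symm

lemma urep_injective : Injective urep :=
  List.replicate_left_injective ()

lemma DFA.eval_urep {Q : Type} (M : DFA Unit Q) (k : ℕ) :
    M.eval (urep k) = (fun q => M.step q ())^[k] M.start := by
  induction k with
  | zero => rfl
  | succ k ih =>
    rw [urep_add, show urep 1 = [()] from rfl, DFA.eval_append_singleton, ih,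
      iterate_succ_apply']

lemma Set.Infinite.exists_length_gt {α : Type*} [Finite α] {L : Set (List α)}
    (hL : L.Infinite) (t : ℕ) : ∃ x ∈ L, t < x.length := by
  by_contra! h
  exact hL ((List.finite_length_le α t).subset h)

lemma Function.exists_isPeriodicPt_iterate_add_le_card {Q : Type*} [Fintype Q] (f : Q → Q)
    (x : Q) : ∃ i p, 0 < p ∧ i + p ≤ Fintype.card Q ∧ IsPeriodicPt f p (f^[i] x) := by
  obtain ⟨a, b, hab, heq⟩ := Fintype.exists_ne_map_eq_of_card_lt
    (fun k : Fin (Fintype.card Q + 1) => f^[k] x) (by simp)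
  wlog hlt : a < b generalizing a b
  · exact this b a hab.symm heq.symm (lt_of_le_of_ne (not_lt.mp hlt) hab.symm)
  refine ⟨a, b - a, by omega, by omega, ?_⟩
  rw [IsPeriodicPt, IsFixedPt, ← iterate_add_apply, Nat.sub_add_cancel hlt.le]
  exact heq.symm

lemma scLe.pos {α : Type*} {L : Language α} {k : ℕ} (h : scLe L k) : 0 < k := by
  obtain ⟨Q, _, M, hcard, -⟩ := h
  have : Nonempty Q := ⟨M.start⟩
  exact Fintype.card_pos.trans_le hcard

lemma scLe.exists_eventually_periodic {L : Language Unit} {c : ℕ} (h : scLe L c) :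
    ∃ i p, 0 < p ∧ i + p ≤ c ∧ ∀ k, i ≤ k → ∀ q, (urep (k + q * p) ∈ L ↔ urep k ∈ L) := by
  obtain ⟨Q, _, M, hcard, rfl⟩ := h
  set f := fun q => M.step q ()
  obtain ⟨i, p, hp, hipQ, hper⟩ := exists_isPeriodicPt_iterate_add_le_card f M.start
  refine ⟨i, p, hp, hipQ.trans hcard, fun k hik q => ?_⟩
  have hperk : IsPeriodicPt f (q * p) (f^[k] M.start) := by
    rw [← Nat.sub_add_cancel hik, iterate_add_apply]
    exact (hper.apply_iterate _).const_mul q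
  rw [DFA.mem_accepts, DFA.mem_accepts, DFA.eval_urep, DFA.eval_urep, add_comm,
    iterate_add_apply, hperk.eq]

lemma scLe.add_two_le_of_finite {L : Language Unit} {n s : ℕ} (h : scLe L n)
    (hfin : L.Finite) (hs : urep s ∈ L) : s + 2 ≤ n := by
  obtain ⟨i, p, hp, hipn, hper⟩ := h.exists_eventually_periodic
  by_contra! hsn
  have hinj : Injective fun q => urep (s + q * p) :=
    urep_injective.comp ((add_right_injective s).comp (mul_left_injective₀ hp.ne'))
  exact Set.infinite_of_injective_forall_mem hinj (fun q => (hper s (by omega) q).2 hs) hfin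

lemma scLe.exists_mem_le_lt_add {L : Language Unit} {m : ℕ} (h : scLe L m)
    (hinf : L.Infinite) (t : ℕ) (ht : m ≤ t + 1) : ∃ s, urep s ∈ L ∧ s ≤ t ∧ t < s + m := by
  obtain ⟨i, p, hp, hipm, hper⟩ := h.exists_eventually_periodic
  suffices hdown : ∀ ℓ, urep ℓ ∈ L → t < ℓ → ∃ s, urep s ∈ L ∧ s ≤ t ∧ t < s + m by
    obtain ⟨x, hx, htx⟩ := hinf.exists_length_gt t
    rw [← urep_length x] at hx
    exact hdown x.length hx htx
  -- remove one period at a time until the length drops to at most `t`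
  intro ℓ
  induction ℓ using Nat.strong_induction_on with
  | _ ℓ ih =>
    intro hℓ htℓ
    have hpred : urep (ℓ - p) ∈ L := by
      have hshift := hper (ℓ - p) (by omega) 1
      rw [one_mul, Nat.sub_add_cancel (by omega)] at hshift
      exact hshift.1 hℓ
    by_cases hle : ℓ - p ≤ t
    · exact ⟨ℓ - p, hpred, hle, by omega⟩
    · exact ih (ℓ - p) (by omega) hpred (by omega)

def thresholdDFA (L : Language Unit) (d : ℕ) : DFA Unit (Fin (d + 1)) where
  step q _ := ⟨min (q + 1) d, by omega⟩
  start := 0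
  accept := {q | urep q ∈ L}

lemma thresholdDFA_eval_urep (L : Language Unit) (d k : ℕ) :
    (thresholdDFA L d).eval (urep k) = ⟨min k d, by omega⟩ := by
  rw [DFA.eval_urep]
  induction k with
  | zero => rfl
  | succ k ih =>
    rw [iterate_succ_apply', ih]
    ext
    simp only [thresholdDFA]
    omega

lemma scLe_of_forall_ge_iff {L : Language Unit} (d : ℕ)
    (h : ∀ t, d ≤ t → (urep t ∈ L ↔ urep d ∈ L)) : scLe L (d + 1) := by
  refine ⟨Fin (d + 1), inferInstance, thresholdDFA L d, by simp, ?_⟩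
  ext x
  rw [DFA.mem_accepts, ← urep_length x, thresholdDFA_eval_urep]
  change urep (min x.length d) ∈ L ↔ urep x.length ∈ L
  rcases le_total x.length d with hle | hle
  · rw [min_eq_left hle]
  · rw [min_eq_right hle, h _ hle]

lemma scLe.urep_sub_two_mem {L : Language Unit} {n : ℕ} (h : scLe L n)
    (h' : ¬ scLe L (n - 1)) (hfin : L.Finite) (hn : 2 ≤ n) : urep (n - 2) ∈ L := by
  by_contra hnot
  have hthreshold : ∀ t, n - 2 ≤ t → (urep t ∈ L ↔ urep (n - 2) ∈ L) := by
    refine fun t ht => iff_of_false (fun ht' => ?_) hnot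
    have hlen := h.add_two_le_of_finite hfin ht'
    exact hnot (by rwa [show n - 2 = t by omega])
  have hsc := scLe_of_forall_ge_iff (n - 2) hthreshold
  exact h' (by rwa [show n - 2 + 1 = n - 1 by omega] at hsc)

lemma urep_mem_langOA {L₁ L₂ : Language Unit} {s r t : ℕ} (hs : urep s ∈ L₁)
    (hr : urep r ∈ L₂) (hst : s ≤ t) (hrt : r ≤ t) (hlt : t < s + r) :
    urep t ∈ langOA L₁ L₂ := by
  refine ⟨urep (t - r), urep (s + r - t), urep (t - s), ?_, ?_, ?_, ?_⟩
  · rw [← List.length_pos_iff, urep, List.length_replicate]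
    omega
  · rwa [← urep_add, show t - r + (s + r - t) = s by omega]
  · rwa [← urep_add, show s + r - t + (t - s) = r by omega]
  · rw [← urep_add, ← urep_add]
    congr 1
    omega

theorem unary_infinite_finite_small_case_general (m n : ℕ)
    (hmn : m ≤ n - 2) (L₁ L₂ : Language Unit)
    (hinf : L₁.Infinite) (h₁ : scLe L₁ m)
    (hfin : L₂.Finite) (h₂ : scLe L₂ n) (h₂' : ¬ scLe L₂ (n - 1)) :
    (∀ t, n - 2 ≤ t → urep t ∈ langOA L₁ L₂) ∧ scLe (langOA L₁ L₂) (n - 1) := by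
  have hm := h₁.pos
  have htop := h₂.urep_sub_two_mem h₂' hfin (by omega)
  have hmem : ∀ t, n - 2 ≤ t → urep t ∈ langOA L₁ L₂ := by
    intro t ht
    obtain ⟨s, hs, hst, hts⟩ := h₁.exists_mem_le_lt_add hinf t (by omega)
    exact urep_mem_langOA hs htop hst ht (by omega)
  refine ⟨hmem, ?_⟩
  have hsc := scLe_of_forall_ge_iff (n - 2) fun t ht => iff_of_true (hmem t ht) (hmem _ le_rfl)
  rwa [show n - 2 + 1 = n - 1 by omega] at hsc

theorem unary_infinite_finite_small_case (m n : ℕ) (hm : 1 ≤ m) (hn : 1 ≤ n)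
    (hmn : m ≤ n - 2) (L₁ L₂ : Language Unit)
    (hinf : L₁.Infinite) (h₁ : scLe L₁ m)
    (hfin : L₂.Finite) (h₂ : scLe L₂ n) (h₂' : ¬ scLe L₂ (n - 1)) :
    (∀ t, n - 2 ≤ t → urep t ∈ langOA L₁ L₂) ∧ scLe (langOA L₁ L₂) (n - 1) :=
  unary_infinite_finite_small_case_general m n hmn L₁ L₂ hinf h₁ hfin h₂ h₂'
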